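/- If F is a regular family on an infinite set M and N ⊆ M is infinite, then ι(F↾N) = ι(F): the Cantor-Bendixson index is preserved under restriction to infinite subsets. -/

import Mathlib

open Set

def chi (s : Finset ℕ) : ℕ → Bool := fun n => decide (n ∈ s)

def IsCompactFam (F : Set (Finset ℕ)) : Prop := IsClosed (chi '' F)

def Hered (F : Set (Finset ℕ)) : Prop := ∀ ⦃s t : Finset ℕ⦄, s ⊆ t → t ∈ F → s ∈ F

def Preceq (s t : Finset ℕ) : Prop :=
  List.Forall₂ (· ≤ ·) (s.sort (· ≤ ·)) (t.sort (· ≤ ·))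

def SpreadingOn (F : Set (Finset ℕ)) (M : Set ℕ) : Prop :=
  ∀ ⦃s t : Finset ℕ⦄, s ∈ F → Preceq s t → ↑t ⊆ M → t ∈ F

def Interpolates (t s : Finset ℕ) : Prop :=
  List.Forall₂ (· ≤ ·) (t.sort (· ≤ ·)) (s.sort (· ≤ ·)) ∧
  List.Forall₂ (· < ·) ((s.sort (· ≤ ·)).dropLast) ((t.sort (· ≤ ·)).tail)

def Ad (F : Set (Finset ℕ)) : Set (Finset ℕ) := {s | ∃ t ∈ F, Interpolates t s}

def Restr (F : Set (Finset ℕ)) (M : Set ℕ) : Set (Finset ℕ) := {s ∈ F | ↑s ⊆ M}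

noncomputable def iterDeriv {X : Type} [TopologicalSpace X] (A : Set X) (o : Ordinal.{0}) : Set X :=
  Ordinal.limitRecOn o A (fun _ ih => derivedSet ih)
    (fun o _ ih => ⋂ (b : Iio o), ih b b.2)

noncomputable def cbIndex (F : Set (Finset ℕ)) : Ordinal.{0} :=
  sInf {o : Ordinal | iterDeriv (chi '' F) o ⊆ {chi ∅}}

def sec (F : Set (Finset ℕ)) (n : ℕ) : Set (Finset ℕ) :=
  {t | (∀ k ∈ t, n < k) ∧ insert n t ∈ F}

open scoped Classical in
noncomputable def IsHomogOn (F : Set (Finset ℕ)) (M : Set ℕ) (α : Ordinal.{0}) : Prop :=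
  if α = 0 then F = {∅}
  else if h : ∃ β, α = Order.succ β then
    ∅ ∈ F ∧ ∀ n ∈ M, IsHomogOn (sec F n) (M ∩ Set.Ioi n) h.choose
  else
    ∅ ∈ F ∧ ∃ g : ℕ → Set.Iio α,
      (∀ n ∈ M, ∀ m ∈ M, n < m → (g n : Ordinal) < (g m : Ordinal)) ∧
      (∀ β < α, ∃ n ∈ M, β < (g n : Ordinal)) ∧
      ∀ n ∈ M, IsHomogOn (sec F n) (M ∩ Set.Ioi n) (g n)
termination_by α
decreasing_by
  · exact lt_of_lt_of_le (Order.lt_succ _) h.choose_spec.ge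
  · exact (g n).2

open scoped Classical in
noncomputable def IsUnifOn (F : Set (Finset ℕ)) (M : Set ℕ) (α : Ordinal.{0}) : Prop :=
  if α = 0 then F = {∅}
  else if h : ∃ β, α = Order.succ β then
    ∀ n ∈ M, IsUnifOn (sec F n) (M ∩ Set.Ioi n) h.choose
  else
    ∃ g : ℕ → Set.Iio α,
      (∀ n ∈ M, ∀ m ∈ M, n < m → (g n : Ordinal) < (g m : Ordinal)) ∧
      (∀ β < α, ∃ n ∈ M, β < (g n : Ordinal)) ∧
      ∀ n ∈ M, IsUnifOn (sec F n) (M ∩ Set.Ioi n) (g n)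
termination_by α
decreasing_by
  · exact lt_of_lt_of_le (Order.lt_succ _) h.choose_spec.ge
  · exact (g n).2

def osum (F G : Set (Finset ℕ)) : Set (Finset ℕ) :=
  {u | ∃ s t : Finset ℕ, s ∈ G ∧ t ∈ F ∧ (∀ a ∈ s, ∀ b ∈ t, a < b) ∧ u = s ∪ t}

def otimes (F G : Set (Finset ℕ)) : Set (Finset ℕ) :=
  {u | ∃ l : List (Finset ℕ),
    l.Chain' (fun a b => ∀ x ∈ a, ∀ y ∈ b, x < y) ∧
    (∀ s ∈ l, s ∈ F ∧ s.Nonempty) ∧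
    (l.map fun s => sInf (↑s : Set ℕ)).toFinset ∈ G ∧
    u = l.foldr (· ∪ ·) ∅}

def IsRegularOn (F : Set (Finset ℕ)) (M : Set ℕ) : Prop :=
  IsCompactFam F ∧ Hered F ∧ SpreadingOn F M ∧ ∀ s ∈ F, ↑s ⊆ M

def InitSeg (s t : Finset ℕ) : Prop := s ⊆ t ∧ ∀ x ∈ t, x ∉ s → ∀ y ∈ s, y < x

def maxElems (F : Set (Finset ℕ)) : Set (Finset ℕ) :=
  {t ∈ F | ∀ u ∈ F, InitSeg t u → u = t}


/-! ### Auxiliary lemmas -/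

theorem iterDeriv_zero {X : Type} [TopologicalSpace X] (A : Set X) : iterDeriv A 0 = A :=
  Ordinal.limitRecOn_zero _ _ _

theorem iterDeriv_succ {X : Type} [TopologicalSpace X] (A : Set X) (o : Ordinal) :
    iterDeriv A (Order.succ o) = derivedSet (iterDeriv A o) :=
  Ordinal.limitRecOn_succ _ _ _ _

theorem iterDeriv_limit {X : Type} [TopologicalSpace X] (A : Set X) (o : Ordinal)
    (ho : Order.IsSuccLimit o) : iterDeriv A o = ⋂ (b : Iio o), iterDeriv A b :=
  Ordinal.limitRecOn_limit _ _ _ _ ho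

theorem iterDeriv_mono {X : Type} [TopologicalSpace X] {A B : Set X} (h : A ⊆ B) (o : Ordinal) :
    iterDeriv A o ⊆ iterDeriv B o := by
  induction o using Ordinal.limitRecOn with
  | zero => simpa [iterDeriv_zero] using h
  | add_one o ih => rw [← Order.succ_eq_add_one, iterDeriv_succ, iterDeriv_succ]; exact derivedSet_mono _ _ ih
  | limit o ho ih =>
      rw [iterDeriv_limit _ _ ho, iterDeriv_limit _ _ ho]
      exact Set.iInter_mono fun b => ih b b.2

theorem image_iterDeriv_subset {X Y : Type} [TopologicalSpace X] [TopologicalSpace Y]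
    {f : X → Y} (hf : Continuous f) (hinj : Function.Injective f) (A : Set X) (o : Ordinal) :
    f '' iterDeriv A o ⊆ iterDeriv (f '' A) o := by
  induction o using Ordinal.limitRecOn with
  | zero => rw [iterDeriv_zero, iterDeriv_zero]
  | add_one o ih =>
      rw [← Order.succ_eq_add_one, iterDeriv_succ, iterDeriv_succ]
      exact (hf.image_derivedSet hinj).trans (derivedSet_mono _ _ ih)
  | limit o ho ih =>
      rw [iterDeriv_limit _ _ ho, iterDeriv_limit _ _ ho]
      rintro y ⟨x, hx, rfl⟩
      exact Set.mem_iInter.2 fun b => ih b b.2 ⟨x, Set.mem_iInter.1 hx b, rfl⟩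

open scoped Classical in
noncomputable def hmap (N : Set ℕ) : (ℕ → Bool) → (ℕ → Bool) :=
  fun x n => if n ∈ N then x (Nat.count (· ∈ N) n) else false

open scoped Classical in
theorem hmap_continuous (N : Set ℕ) : Continuous (hmap N) := by
  refine continuous_pi fun n => ?_
  by_cases h : n ∈ N
  · have : (fun x : ℕ → Bool => hmap N x n) = fun x => x (Nat.count (· ∈ N) n) := by
      funext x; simp [hmap, h]
    rw [this]; exact continuous_apply _
  · have : (fun x : ℕ → Bool => hmap N x n) = fun _ => false := by
      funext x; simp [hmap, h]
    rw [this]; exact continuous_const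

open scoped Classical in
theorem hmap_injective {N : Set ℕ} (hN : N.Infinite) : Function.Injective (hmap N) := by
  have hN' : (setOf (· ∈ N)).Infinite := hN
  intro x y hxy
  funext k
  have h1 := congrFun hxy (Nat.nth (· ∈ N) k)
  have hmem : Nat.nth (· ∈ N) k ∈ N := Nat.nth_mem_of_infinite hN' k
  simpa [hmap, hmem, Nat.count_nth_of_infinite hN' k] using h1

open scoped Classical in
theorem hmap_chi {N : Set ℕ} (hN : N.Infinite) (s : Finset ℕ) :
    hmap N (chi s) = chi (s.image (Nat.nth (· ∈ N))) := by
  classical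
  have hN' : (setOf (· ∈ N)).Infinite := hN
  funext n
  by_cases h : n ∈ N
  · simp only [hmap, chi, if_pos h]
    congr 1
    simp only [Finset.mem_image, eq_iff_iff]
    constructor
    · intro hc; exact ⟨_, hc, Nat.nth_count h⟩
    · rintro ⟨a, ha, rfl⟩; rwa [Nat.count_nth_of_infinite hN' a]
  · simp only [hmap, chi, if_neg h]
    symm
    simp only [decide_eq_false_iff_not, Finset.mem_image, not_exists]
    rintro a ⟨ha, rfl⟩
    exact h (Nat.nth_mem_of_infinite hN' a)

theorem hmap_chi_empty (N : Set ℕ) : hmap N (chi ∅) = chi ∅ := by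
  classical
  funext n; by_cases h : n ∈ N <;> simp [hmap, chi, h]

open scoped Classical in
theorem preceq_image_nth {N : Set ℕ} (hN : N.Infinite) (s : Finset ℕ) :
    Preceq s (s.image (Nat.nth (· ∈ N))) := by
  have hN' : (setOf (· ∈ N)).Infinite := hN
  have hmono : StrictMono (Nat.nth (· ∈ N)) := Nat.nth_strictMono hN'
  have hsort : (s.image (Nat.nth (· ∈ N))).sort (· ≤ ·)
      = (s.sort (· ≤ ·)).map (Nat.nth (· ∈ N)) := by
    have hms := Multiset.map_sort (r := (· ≤ · : ℕ → ℕ → Prop)) (r' := (· ≤ · : ℕ → ℕ → Prop))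
      (Nat.nth (· ∈ N)) s.val
      (fun a _ b _ => ⟨fun h => hmono.monotone h, fun h => (Nat.nth_le_nth hN').1 h⟩)
    rw [← Finset.sort_val, ← Finset.sort_val,
      Finset.image_val_of_injOn (hmono.injective.injOn), ← hms]
  rw [Preceq, hsort, List.forall₂_map_right_iff]
  exact List.forall₂_same.2 fun x _ => (hmono.id_le x)

/-- Cantor-Bendixson index of a regular family is preserved under
restriction to infinite subsets. -/
theorem regular_index_restr (F : Set (Finset ℕ)) (M N : Set ℕ)
    (hM : M.Infinite) (hF : IsRegularOn F M) (hNM : N ⊆ M) (hN : N.Infinite) :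
    cbIndex (Restr F N) = cbIndex F := by
  classical
  obtain ⟨hcomp, hher, hspread, hsubM⟩ := hF
  have hN' : (setOf (· ∈ N)).Infinite := hN
  have himg : ∀ s ∈ F, s.image (Nat.nth (· ∈ N)) ∈ Restr F N := by
    intro s hs
    have htN : ↑(s.image (Nat.nth (· ∈ N))) ⊆ N := by
      intro x hx
      simp only [Finset.coe_image, Set.mem_image] at hx
      obtain ⟨a, _, rfl⟩ := hx
      exact Nat.nth_mem_of_infinite hN' a
    exact ⟨hspread hs (preceq_image_nth hN s) (htN.trans hNM), htN⟩
  have hRF : Restr F N ⊆ F := fun s hs => hs.1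
  have key : {o : Ordinal | iterDeriv (chi '' Restr F N) o ⊆ {chi ∅}}
      = {o : Ordinal | iterDeriv (chi '' F) o ⊆ {chi ∅}} := by
    ext o
    simp only [Set.mem_setOf_eq]
    constructor
    · intro ho x hx
      have h1 : hmap N x ∈ iterDeriv (hmap N '' (chi '' F)) o :=
        image_iterDeriv_subset (hmap_continuous N) (hmap_injective hN) _ o ⟨x, hx, rfl⟩
      have h2 : hmap N '' (chi '' F) ⊆ chi '' Restr F N := by
        rintro _ ⟨_, ⟨s, hs, rfl⟩, rfl⟩
        exact ⟨s.image (Nat.nth (· ∈ N)), himg s hs, (hmap_chi hN s).symm⟩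
      have h3 : hmap N x ∈ ({chi ∅} : Set (ℕ → Bool)) := ho (iterDeriv_mono h2 o h1)
      have h4 : hmap N x = hmap N (chi ∅) := by rw [hmap_chi_empty]; exact h3
      exact hmap_injective hN h4
    · intro ho
      exact (iterDeriv_mono (Set.image_mono (f := chi) hRF) o).trans ho
  unfold cbIndex
  rw [key]
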